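/- Let d be a positive integer and let S^(d) be the subsemigroup of the multiplicative semigroup M₂(ℤ) of 2×2 integer matrices generated by g = [[1, d], [0, 1]] and e = [[1, 0], [1, 0]]. Then S^(d) has intermediate growth: with respect to the generating set A = {e, g}, lim_{n→∞} (log γ_A(n))/(log n) = ∞ and lim_{n→∞} (log γ_A(n))/n = 0. -/

import Mathlib

open Filter

/-- The growth function `γ_A(n)` of the semigroup generated by `A` (with identity
adjoined): the number of elements expressible as a product of at most `n`
elements of `A`. -/
noncomputable def growth {S : Type*} [Monoid S] (A : Set S) (n : ℕ) : ℕ :=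
  Set.ncard {x : S | ∃ l : List S, (∀ a ∈ l, a ∈ A) ∧ l.length ≤ n ∧ l.prod = x}

/-!
Since `e g^a e = (1 + a d) e`, a word in `g, e` evaluates either to a power of `g` or to
`c • g^a e g^b`, where `c = ∏ (1 + a_i d)` and the `a_i` are the lengths of the interior blocks of
`g`'s. A word of length `≤ n` thus determines the multiset `{a_i}` with `∑ (a_i + 1) ≤ n`
up to `(n + 1)^2` choices of `a, b`; such a multiset is fixed by the multiplicities of its parts
`≤ √n` together with the sorted list of its fewer than `√n` larger parts, so there are at most
`(n + 1)^O(√n)` of them and the growth is subexponential.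

Conversely, take `t` distinct primes `p_i = 1 + a_i d` (there are infinitely many primes
`≡ 1 mod d`). The elements `(∏ p_i ^ v_i) • e` with all `v_i ≤ E` are pairwise distinct by unique
factorisation and have length `O(E)`, so `γ(n)` grows at least like `n^t` for every `t`.
-/

open Topology

section WordBall

variable {S : Type*} [Monoid S] (A : Set S)

def wordBall (n : ℕ) : Set S :=
  {x | ∃ l : List S, (∀ a ∈ l, a ∈ A) ∧ l.length ≤ n ∧ l.prod = x}

theorem growth_eq_ncard_wordBall (n : ℕ) : growth A n = (wordBall A n).ncard := rfl

variable {A}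

theorem one_mem_wordBall (n : ℕ) : (1 : S) ∈ wordBall A n :=
  ⟨[], by simp, by simp, rfl⟩

theorem mem_wordBall_one {a : S} (ha : a ∈ A) : a ∈ wordBall A 1 :=
  ⟨[a], by simpa using ha, by simp, by simp⟩

theorem wordBall_mono {m n : ℕ} (h : m ≤ n) : wordBall A m ⊆ wordBall A n :=
  fun _ ⟨l, hl, hlen, hx⟩ => ⟨l, hl, hlen.trans h, hx⟩

theorem mul_mem_wordBall {x y : S} {m n : ℕ} (hx : x ∈ wordBall A m) (hy : y ∈ wordBall A n) :
    x * y ∈ wordBall A (m + n) := by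
  obtain ⟨l, hl, hlen, rfl⟩ := hx
  obtain ⟨l', hl', hlen', rfl⟩ := hy
  refine ⟨l ++ l', fun a ha => ?_, by simp; omega, List.prod_append⟩
  rcases List.mem_append.1 ha with ha | ha
  exacts [hl a ha, hl' a ha]

theorem pow_mem_wordBall {a : S} (ha : a ∈ A) (k : ℕ) : a ^ k ∈ wordBall A k := by
  induction k with
  | zero => simpa using one_mem_wordBall 0
  | succ k ih => rw [pow_succ]; exact mul_mem_wordBall ih (mem_wordBall_one ha)

theorem wordBall_finite (hA : A.Finite) (n : ℕ) : (wordBall A n).Finite := by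
  have : Finite A := hA.to_subtype
  refine ((List.finite_length_le A n).image fun l : List A => (l.map (↑)).prod).subset ?_
  rintro x ⟨l, hl, hlen, rfl⟩
  lift l to List A using hl
  exact ⟨l, by simpa using hlen, rfl⟩

theorem growth_pos (hA : A.Finite) (n : ℕ) : 0 < growth A n :=
  growth_eq_ncard_wordBall A n ▸ (Set.ncard_pos (wordBall_finite hA n)).2 ⟨1, one_mem_wordBall n⟩

end WordBall

theorem List.eq_of_forall_getD_eq {α : Type*} {l l' : List α} {x : α} (hl : x ∉ l) (hl' : x ∉ l')
    (h : ∀ i, l.getD i x = l'.getD i x) : l = l' := by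
  refine List.ext_getElem? fun i => ?_
  have hi := h i
  rw [List.getD_eq_getElem?_getD, List.getD_eq_getElem?_getD] at hi
  rcases hli : l[i]? with _ | a <;> rcases hli' : l'[i]? with _ | b <;>
    simp only [hli, hli', Option.getD_none, Option.getD_some] at hi
  · rfl
  · exact (hl' (hi ▸ List.mem_of_getElem? hli')).elim
  · exact (hl (hi ▸ List.mem_of_getElem? hli)).elim
  · rw [hi]

theorem Multiset.card_filter_lt_mul_le_sum (M : Multiset ℕ) (s : ℕ) :
    card (M.filter (s < ·)) * (s + 1) ≤ M.sum :=
  calc card (M.filter (s < ·)) * (s + 1) ≤ (M.filter (s < ·)).sum := by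
        rw [← smul_eq_mul]
        exact card_nsmul_le_sum fun x hx => (of_mem_filter hx : s < x)
    _ ≤ (M.filter (s < ·)).sum + (M.filter fun x => ¬s < x).sum := le_self_add
    _ = M.sum := by rw [← sum_add, filter_add_not]

section MultisetCount

open Finset

def boundedMultisets (n : ℕ) : Set (Multiset ℕ) :=
  {M | M.sum + Multiset.card M ≤ n}

def largeParts (s : ℕ) (M : Multiset ℕ) : List ℕ :=
  (M.filter (s < ·)).sort (· ≤ ·)

theorem coe_largeParts (s : ℕ) (M : Multiset ℕ) :
    (largeParts s M : Multiset ℕ) = M.filter (s < ·) :=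
  Multiset.sort_eq _ _

theorem mem_largeParts {s x : ℕ} {M : Multiset ℕ} : x ∈ largeParts s M ↔ x ∈ M ∧ s < x := by
  rw [← Multiset.mem_coe, coe_largeParts, Multiset.mem_filter]

def partCode (s : ℕ) (M : Multiset ℕ) : (Fin (s + 1) → ℕ) × (Fin s → ℕ) :=
  (fun i => M.count (i : ℕ), fun i => (largeParts s M).getD i 0)

theorem partCode_injOn (s : ℕ) :
    {M : Multiset ℕ | (largeParts s M).length ≤ s}.InjOn (partCode s) := by
  intro M hM M' hM' h
  simp only [partCode, Prod.mk.injEq] at h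
  obtain ⟨hsmall, hlarge⟩ := h
  have zero_not_mem (N : Multiset ℕ) : 0 ∉ largeParts s N := by simp [mem_largeParts]
  have hlarge' : largeParts s M = largeParts s M' := by
    refine List.eq_of_forall_getD_eq (zero_not_mem M) (zero_not_mem M') fun i => ?_
    by_cases hi : i < s
    · exact congrFun hlarge ⟨i, hi⟩
    · rw [List.getD_eq_default _ _ (by simp only [Set.mem_ofPred_eq] at hM; omega),
        List.getD_eq_default _ _ (by simp only [Set.mem_ofPred_eq] at hM'; omega)]
  ext x
  by_cases hx : x ≤ s
  · exact congrFun hsmall ⟨x, by omega⟩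
  · rw [← Multiset.count_filter_of_pos (p := (s < ·)) (by omega),
      ← Multiset.count_filter_of_pos (p := (s < ·)) (s := M') (by omega),
      ← coe_largeParts, ← coe_largeParts, hlarge']

def partCodeBox (n : ℕ) : Finset ((Fin (n.sqrt + 1 + 1) → ℕ) × (Fin (n.sqrt + 1) → ℕ)) :=
  (Fintype.piFinset fun _ => range (n + 1)) ×ˢ (Fintype.piFinset fun _ => range (n + 1))

theorem card_partCodeBox (n : ℕ) : (partCodeBox n).card = (n + 1) ^ (2 * n.sqrt + 3) := by
  simp only [partCodeBox, card_product, Fintype.card_piFinset_const, card_range]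
  ring

theorem partCode_mem {n : ℕ} {M : Multiset ℕ} (hM : M ∈ boundedMultisets n) :
    partCode (n.sqrt + 1) M ∈ partCodeBox n := by
  simp only [boundedMultisets, Set.mem_ofPred_eq] at hM
  simp only [partCode, partCodeBox, mem_product, Fintype.mem_piFinset, mem_range]
  refine ⟨fun i => ?_, fun i => ?_⟩
  · have := Multiset.count_le_card (i : ℕ) M
    omega
  · by_cases hi : (i : ℕ) < (largeParts (n.sqrt + 1) M).length
    · rw [List.getD_eq_getElem _ _ hi]
      have hmem := (mem_largeParts.1 (List.getElem_mem hi)).1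
      have := Multiset.le_sum_of_mem hmem
      omega
    · rw [List.getD_eq_default _ _ (by omega)]
      omega

theorem boundedMultisets_subset_length_largeParts_le (n : ℕ) :
    boundedMultisets n ⊆ {M | (largeParts (n.sqrt + 1) M).length ≤ n.sqrt + 1} := by
  intro M hM
  rw [Set.mem_ofPred_eq, largeParts, Multiset.length_sort]
  have hsum := M.card_filter_lt_mul_le_sum (n.sqrt + 1)
  have hn := Nat.lt_succ_sqrt n
  simp only [boundedMultisets, Set.mem_ofPred_eq] at hM
  nlinarith

theorem boundedMultisets_finite (n : ℕ) : (boundedMultisets n).Finite :=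
  Set.Finite.of_finite_image
    ((Finset.finite_toSet _).subset (Set.image_subset_iff.2 fun _ hM => partCode_mem hM))
    ((partCode_injOn _).mono (boundedMultisets_subset_length_largeParts_le n))

theorem ncard_boundedMultisets_le (n : ℕ) :
    (boundedMultisets n).ncard ≤ (n + 1) ^ (2 * n.sqrt + 3) := by
  rw [← card_partCodeBox, ← Set.ncard_coe_finset]
  exact Set.ncard_le_ncard_of_injOn _ (fun _ hM => partCode_mem hM)
    ((partCode_injOn _).mono (boundedMultisets_subset_length_largeParts_le n))

end MultisetCount

theorem Nat.prod_pow_injective {ι : Type*} [Fintype ι] {p : ι → ℕ} (hp : ∀ i, (p i).Prime)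
    (hinj : Function.Injective p) : Function.Injective fun v : ι → ℕ => ∏ i, p i ^ v i := by
  have factorization_eq (v : ι → ℕ) (j : ι) : (∏ i, p i ^ v i).factorization (p j) = v j := by
    rw [Nat.factorization_prod fun i _ => pow_ne_zero _ (hp i).ne_zero, Finset.sum_apply']
    simp_rw [(hp _).factorization_pow, Finsupp.single_apply]
    rw [Finset.sum_eq_single j (fun i _ hij => if_neg (hinj.ne hij)) (by simp), if_pos rfl]
  intro v w h
  funext j
  rw [← factorization_eq v j, ← factorization_eq w j]
  exact congrArg (fun x => x.factorization (p j)) h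

theorem exists_injective_prime_one_add_mul {d : ℕ} (hd : 0 < d) (t : ℕ) :
    ∃ a : Fin t → ℕ, Function.Injective (fun i => 1 + a i * d) ∧ ∀ i, (1 + a i * d).Prime := by
  let P := (Nat.infinite_setOfPred_prime_modEq_one hd.ne').natEmbedding
  have one_add_div_mul (i : Fin t) : 1 + (P i - 1) / d * d = P i := by
    obtain ⟨hprime, hmod⟩ := (P i).2
    have := (Nat.modEq_iff_dvd' hprime.one_le).1 hmod.symm
    rw [Nat.div_mul_cancel this]
    have := hprime.one_le
    omega
  refine ⟨fun i => (P i - 1) / d, fun i j h => ?_, fun i => ?_⟩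
  · simp only [one_add_div_mul] at h
    exact Fin.ext (P.injective (Subtype.ext h))
  · rw [one_add_div_mul]; exact (P i).2.1

section Asymptotics

open Real

theorem exists_pos_mul_pow_le_of_pow_le {f : ℕ → ℕ} {R t : ℕ}
    (h : ∀ E n, R * E < n → (E + 1) ^ t ≤ f n) :
    ∃ c : ℝ, 0 < c ∧ ∀ᶠ n : ℕ in atTop, c * (n : ℝ) ^ t ≤ f n := by
  refine ⟨1 / ((R : ℝ) + 1) ^ t, by positivity, (eventually_ge_atTop 1).mono fun n hn => ?_⟩
  set E := (n - 1) / (R + 1)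
  have hE : (R + 1) * E ≤ n - 1 := Nat.mul_div_le (n - 1) (R + 1)
  have hnE : n - 1 < (R + 1) * (E + 1) := Nat.lt_mul_div_succ (n - 1) (Nat.succ_pos R)
  have hn' : (n : ℝ) ≤ ((R : ℝ) + 1) * (E + 1) := by
    exact_mod_cast (by omega : n ≤ (R + 1) * (E + 1))
  calc 1 / ((R : ℝ) + 1) ^ t * (n : ℝ) ^ t = ((n : ℝ) / (R + 1)) ^ t := by rw [div_pow]; ring
    _ ≤ ((E : ℝ) + 1) ^ t := by
        gcongr
        rw [div_le_iff₀ (by positivity)]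
        linarith
    _ ≤ f n := by
        have : R * E ≤ (R + 1) * E := Nat.mul_le_mul_right _ (by omega)
        exact_mod_cast h E n (by omega)

theorem tendsto_log_div_log_atTop_of_forall_pow_le {f : ℕ → ℝ}
    (h : ∀ t : ℕ, ∃ c : ℝ, 0 < c ∧ ∀ᶠ n : ℕ in atTop, c * (n : ℝ) ^ t ≤ f n) :
    Tendsto (fun n => log (f n) / log n) atTop atTop := by
  have hlog : Tendsto (fun n : ℕ => log n) atTop atTop :=
    tendsto_log_atTop.comp tendsto_natCast_atTop_atTop
  refine tendsto_atTop.2 fun C => ?_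
  obtain ⟨c, hc, hf⟩ := h (⌈C⌉₊ + 1)
  filter_upwards [hf, hlog.eventually_gt_atTop 0, hlog.eventually_ge_atTop (-log c)]
    with n hfn hpos hlarge
  have hn : (0 : ℝ) < n := by
    rcases Nat.eq_zero_or_pos n with rfl | h0
    · simp at hpos
    · exact_mod_cast h0
  have key : log c + (⌈C⌉₊ + 1 : ℕ) * log n ≤ log (f n) := by
    rw [← log_pow, ← log_mul hc.ne' (by positivity)]
    exact log_le_log (by positivity) hfn
  rw [le_div_iff₀ hpos]
  have := Nat.le_ceil C
  push_cast at key
  nlinarith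

theorem log_div_le_of_le_pow_sqrt {m n C : ℕ} (hm : 0 < m) (hn : 1 ≤ n)
    (h : m ≤ (n + 1) ^ (C * (n.sqrt + 1))) :
    log m / n ≤ 4 * C * (log ((n : ℝ) + 1) / √((n : ℝ) + 1)) := by
  set x : ℝ := n + 1
  have hn1 : (1 : ℝ) ≤ n := by exact_mod_cast hn
  have hsqrt : (n.sqrt : ℝ) + 1 ≤ 2 * √x := by
    have := Real.nat_sqrt_le_real_sqrt (a := n)
    have : √(n : ℝ) ≤ √x := sqrt_le_sqrt (by simp [x])
    have : 1 ≤ √x := one_le_sqrt.2 (by simp [x])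
    linarith
  have hlogx : 0 ≤ log x := log_nonneg (by simp [x])
  have hlogm : log m ≤ C * (2 * √x) * log x :=
    calc log m ≤ log (x ^ (C * (n.sqrt + 1))) := by
          refine log_le_log (by exact_mod_cast hm) ?_
          simp only [x]; exact_mod_cast h
      _ = C * ((n.sqrt : ℝ) + 1) * log x := by rw [log_pow]; push_cast; ring
      _ ≤ C * (2 * √x) * log x := by gcongr
  calc log m / n ≤ C * (2 * √x) * log x / n := by gcongr
    _ ≤ C * (2 * √x) * log x / (x / 2) :=
        div_le_div_of_nonneg_left (by positivity) (by positivity) (by simp only [x]; linarith)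
    _ = 4 * C * (log x / √x) := by
        have hx0 : x ≠ 0 := by positivity
        have hsx : √x ≠ 0 := (sqrt_pos.2 (by positivity)).ne'
        field_simp
        rw [sq_sqrt (by positivity)]
        field_simp
        ring

theorem tendsto_log_div_self_of_le_pow_sqrt {f : ℕ → ℕ} (hpos : ∀ n, 0 < f n) (C : ℕ)
    (h : ∀ᶠ n in atTop, f n ≤ (n + 1) ^ (C * (n.sqrt + 1))) :
    Tendsto (fun n => log (f n) / n) atTop (𝓝 0) := by
  have hlim : Tendsto (fun n : ℕ => 4 * C * (log ((n : ℝ) + 1) / √((n : ℝ) + 1)))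
      atTop (𝓝 0) := by
    have := (isLittleO_log_rpow_atTop (by norm_num : (0 : ℝ) < 1 / 2)).tendsto_div_nhds_zero
    simp_rw [← sqrt_eq_rpow] at this
    simpa using
      (this.comp (tendsto_atTop_add_const_right _ 1 tendsto_natCast_atTop_atTop)).const_mul
        (4 * C : ℝ)
  refine squeeze_zero' (Eventually.of_forall fun n =>
    div_nonneg (log_nonneg (by exact_mod_cast hpos n)) n.cast_nonneg) ?_ hlim
  filter_upwards [h, eventually_ge_atTop 1] with n hn h1
  exact log_div_le_of_le_pow_sqrt (hpos n) h1 hn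

end Asymptotics

namespace IntermediateGrowth

variable (d : ℕ)

def matG : Matrix (Fin 2) (Fin 2) ℤ := !![1, (d : ℤ); 0, 1]

def matE : Matrix (Fin 2) (Fin 2) ℤ := !![1, 0; 1, 0]

def gens : Set (Matrix (Fin 2) (Fin 2) ℤ) := {matG d, matE}

theorem matG_mem_gens : matG d ∈ gens d := Or.inl rfl

theorem matE_mem_gens : matE ∈ gens d := Or.inr rfl

theorem gens_finite : (gens d).Finite := (Set.finite_singleton _).insert _

theorem matG_pow (a : ℕ) : matG d ^ a = !![1, (a : ℤ) * d; 0, 1] := by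
  induction a with
  | zero => ext i j; fin_cases i <;> fin_cases j <;> simp
  | succ a ih =>
    rw [pow_succ, ih, matG]; ext i j; fin_cases i <;> fin_cases j <;> simp; ring

theorem matE_mul_matG_pow_mul_matE (a : ℕ) :
    matE * matG d ^ a * matE = (1 + (a : ℤ) * d) • matE := by
  rw [matG_pow, matE]; ext i j; fin_cases i <;> fin_cases j <;> simp [Matrix.mul_apply]

def blockScalar (M : Multiset ℕ) : ℤ := (M.map fun a : ℕ => 1 + (a : ℤ) * d).prod

theorem blockScalar_zero : blockScalar d 0 = 1 := rfl

theorem blockScalar_cons (a : ℕ) (M : Multiset ℕ) :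
    blockScalar d (a ::ₘ M) = (1 + (a : ℤ) * d) * blockScalar d M := by
  simp [blockScalar]

theorem list_prod_eq_matG_pow_or_smul (l : List (Matrix (Fin 2) (Fin 2) ℤ))
    (hl : ∀ x ∈ l, x ∈ gens d) :
    l.prod = matG d ^ l.length ∨
      ∃ M a b, M.sum + Multiset.card M + a + b < l.length ∧
        l.prod = blockScalar d M • (matG d ^ a * matE * matG d ^ b) := by
  induction l with
  | nil => simp
  | cons x l ih =>
    obtain hG | hE : x = matG d ∨ x = matE := hl x List.mem_cons_self
    all_goals
      subst x
      rcases ih fun y hy => hl y (List.mem_cons_of_mem _ hy) with h | ⟨M, a, b, hcost, h⟩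
    · exact .inl (by rw [List.prod_cons, h, List.length_cons, pow_succ'])
    · refine .inr ⟨M, a + 1, b, by simp only [List.length_cons]; omega, ?_⟩
      rw [List.prod_cons, h, Matrix.mul_smul, ← mul_assoc, ← mul_assoc, ← pow_succ']
    · refine .inr ⟨0, 0, l.length, by simp, ?_⟩
      rw [List.prod_cons, h, blockScalar_zero, one_smul, pow_zero, one_mul]
    · refine .inr ⟨a ::ₘ M, 0, b, ?_, ?_⟩
      · simp only [List.length_cons, Multiset.sum_cons, Multiset.card_cons]; omega
      rw [List.prod_cons, h, Matrix.mul_smul, ← mul_assoc, ← mul_assoc,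
        matE_mul_matG_pow_mul_matE, Matrix.smul_mul, smul_smul, blockScalar_cons, pow_zero,
        one_mul, mul_comm]

theorem wordBall_subset (n : ℕ) :
    wordBall (gens d) n ⊆ (matG d ^ ·) '' Set.Iic n ∪
      (fun p : Multiset ℕ × ℕ × ℕ =>
          blockScalar d p.1 • (matG d ^ p.2.1 * matE * matG d ^ p.2.2)) ''
        (boundedMultisets n ×ˢ Set.Iic n ×ˢ Set.Iic n) := by
  rintro x ⟨l, hl, hlen, rfl⟩
  rcases list_prod_eq_matG_pow_or_smul d l hl with h | ⟨M, a, b, hcost, h⟩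
  · exact .inl ⟨l.length, hlen, h.symm⟩
  · refine .inr ⟨(M, a, b), ⟨?_, ?_, ?_⟩, h.symm⟩ <;>
      simp only [boundedMultisets, Set.mem_Iic, Set.mem_ofPred_eq] <;> omega

theorem growth_le {n : ℕ} (hn : 1 ≤ n) : growth (gens d) n ≤ (n + 1) ^ (6 * (n.sqrt + 1)) := by
  have ncard_Iic : (Set.Iic n).ncard = n + 1 := by
    rw [← Finset.coe_Iic, Set.ncard_coe_finset, Nat.card_Iic]
  have hfin := (boundedMultisets_finite n).prod ((Set.finite_Iic n).prod (Set.finite_Iic n))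
  rw [growth_eq_ncard_wordBall]
  calc (wordBall (gens d) n).ncard
        ≤ (n + 1) + (boundedMultisets n).ncard * ((n + 1) * (n + 1)) := by
        refine (Set.ncard_le_ncard (wordBall_subset d n)
          (((Set.finite_Iic n).image _).union (hfin.image _))).trans
          ((Set.ncard_union_le _ _).trans (add_le_add ?_ ?_))
        · exact (Set.ncard_image_le (Set.finite_Iic n)).trans ncard_Iic.le
        · exact (Set.ncard_image_le hfin).trans (by rw [Set.ncard_prod, Set.ncard_prod, ncard_Iic])
    _ ≤ (n + 1) + (n + 1) ^ (2 * n.sqrt + 3) * ((n + 1) * (n + 1)) := by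
        gcongr; exact ncard_boundedMultisets_le n
    _ ≤ (n + 1) ^ (2 * n.sqrt + 6) := by
        have h1 : n + 1 ≤ (n + 1) ^ (2 * n.sqrt + 5) := Nat.le_self_pow (by omega) _
        rw [show (n + 1) ^ (2 * n.sqrt + 3) * ((n + 1) * (n + 1)) =
          (n + 1) ^ (2 * n.sqrt + 5) by ring,
          show (n + 1) ^ (2 * n.sqrt + 6) = (n + 1) ^ (2 * n.sqrt + 5) * (n + 1) by ring]
        nlinarith
    _ ≤ (n + 1) ^ (6 * (n.sqrt + 1)) := Nat.pow_le_pow_right (by omega) (by omega)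

theorem smul_matE_mem_wordBall {c : ℤ} {m : ℕ} (h : c • matE ∈ wordBall (gens d) m) (a : ℕ) :
    ((1 + (a : ℤ) * d) * c) • matE ∈ wordBall (gens d) (m + (a + 1)) := by
  have hmem := mul_mem_wordBall (mul_mem_wordBall (mem_wordBall_one (matE_mem_gens d))
    (pow_mem_wordBall (matG_mem_gens d) a)) h
  rwa [Matrix.mul_smul, matE_mul_matG_pow_mul_matE, smul_smul, mul_comm,
    show 1 + a + m = m + (a + 1) by ring] at hmem

theorem pow_mul_smul_matE_mem_wordBall {c : ℤ} {m : ℕ} (h : c • matE ∈ wordBall (gens d) m)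
    (a k : ℕ) : ((1 + (a : ℤ) * d) ^ k * c) • matE ∈ wordBall (gens d) (m + k * (a + 1)) := by
  induction k with
  | zero => simpa using h
  | succ k ih =>
    rw [pow_succ', mul_assoc, add_mul, one_mul, ← add_assoc]
    exact smul_matE_mem_wordBall d ih a

theorem prod_pow_smul_matE_mem_wordBall {ι : Type*} (s : Finset ι) (a v : ι → ℕ) :
    (∏ i ∈ s, (1 + (a i : ℤ) * d) ^ v i) • matE ∈
      wordBall (gens d) (∑ i ∈ s, v i * (a i + 1) + 1) := by
  classical
  induction s using Finset.induction_on with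
  | empty => simpa using mem_wordBall_one (matE_mem_gens d)
  | insert j s hj ih =>
    rw [Finset.prod_insert hj, Finset.sum_insert hj,
      show v j * (a j + 1) + ∑ i ∈ s, v i * (a i + 1) + 1 =
        ∑ i ∈ s, v i * (a i + 1) + 1 + v j * (a j + 1) by ring]
    exact pow_mul_smul_matE_mem_wordBall d ih (a j) (v j)

theorem exists_pow_le_growth (hd : 0 < d) (t : ℕ) :
    ∃ R : ℕ, ∀ E n, R * E < n → (E + 1) ^ t ≤ growth (gens d) n := by
  obtain ⟨a, hinj, hprime⟩ := exists_injective_prime_one_add_mul hd t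
  refine ⟨∑ i, (a i + 1), fun E n hn => ?_⟩
  let V : Finset (Fin t → ℕ) := Fintype.piFinset fun _ => Finset.range (E + 1)
  let φ : (Fin t → ℕ) → Matrix (Fin 2) (Fin 2) ℤ := fun v => (∏ i, (1 + (a i : ℤ) * d) ^ v i) • matE
  have hmaps : ∀ v ∈ (V : Set (Fin t → ℕ)), φ v ∈ wordBall (gens d) n := by
    intro v hv
    simp only [V, Finset.mem_coe, Fintype.mem_piFinset, Finset.mem_range] at hv
    refine wordBall_mono ?_ (prod_pow_smul_matE_mem_wordBall d Finset.univ a v)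
    have : ∑ i, v i * (a i + 1) ≤ E * ∑ i, (a i + 1) := by
      rw [Finset.mul_sum]
      exact Finset.sum_le_sum fun i _ => Nat.mul_le_mul_right _ (Nat.lt_succ_iff.1 (hv i))
    nlinarith
  have hinjOn : Set.InjOn φ (V : Set (Fin t → ℕ)) := by
    intro v _ w _ h
    have h10 := congrFun (congrFun h 1) 0
    simp only [φ, matE, Matrix.smul_apply, Matrix.of_apply, Matrix.cons_val', Matrix.cons_val_one,
      Matrix.cons_val_zero, smul_eq_mul, mul_one] at h10
    exact Nat.prod_pow_injective hprime hinj (by exact_mod_cast h10)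
  calc (E + 1) ^ t = (V : Set (Fin t → ℕ)).ncard := by
        rw [Set.ncard_coe_finset, Fintype.card_piFinset_const, Finset.card_range]
    _ ≤ growth (gens d) n := by
        rw [growth_eq_ncard_wordBall]
        exact Set.ncard_le_ncard_of_injOn φ hmaps hinjOn (wordBall_finite (gens_finite d) n)

end IntermediateGrowth

open IntermediateGrowth

/-- for every positive integer `d`, the subsemigroup `S^(d)` of
`M₂(ℤ)` generated by `g = [[1,d],[0,1]]` and `e = [[1,0],[1,0]]` (with the
identity matrix adjoined) has intermediate growth with respect to `A = {e, g}`: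
`lim_{n→∞} (log γ_A(n))/(log n) = ∞` and `lim_{n→∞} (log γ_A(n))/n = 0`. -/
theorem stmt12 (d : ℕ) (hd : 0 < d) :
    Tendsto (fun n : ℕ =>
        Real.log (growth ({!![(1 : ℤ), (d : ℤ); 0, 1], !![(1 : ℤ), 0; 1, 0]} :
          Set (Matrix (Fin 2) (Fin 2) ℤ)) n) / Real.log n) atTop atTop ∧
    Tendsto (fun n : ℕ =>
        Real.log (growth ({!![(1 : ℤ), (d : ℤ); 0, 1], !![(1 : ℤ), 0; 1, 0]} :
          Set (Matrix (Fin 2) (Fin 2) ℤ)) n) / (n : ℝ)) atTop (nhds 0) := by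
  change Tendsto (fun n : ℕ => Real.log (growth (gens d) n) / Real.log n) atTop atTop ∧
    Tendsto (fun n : ℕ => Real.log (growth (gens d) n) / (n : ℝ)) atTop (𝓝 0)
  refine ⟨tendsto_log_div_log_atTop_of_forall_pow_le fun t => ?_,
    tendsto_log_div_self_of_le_pow_sqrt (growth_pos (gens_finite d)) 6
      ((eventually_ge_atTop 1).mono fun _ hn => growth_le d hn)⟩
  obtain ⟨R, hR⟩ := exists_pow_le_growth d hd t
  exact exists_pos_mul_pow_le_of_pow_le hR
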